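/- Let T > 0, γ > 0, r > 0, σ_F > 0, μ_F ∈ ℝ, p₂ < 1 with p₂ ≠ 0, λ > 0, V̄ > 0, ψ > 0 and F₀ > 0, and assume Case I, i.e. D := 1 + σ_F(p₂ − 1)/γ > 0. Let W_T be a Gaussian random variable with mean 0 and variance T, set Z := exp(−(r + γ²/2)T − γ W_T), A := ψ F₀ h(0,T) and F_ψ := A · Z^(−σ_F/γ) (the terminal fixed-term position ψF(T)). Then the Case I conditional value function formula holds: E[(1/p₂) · max(V̄, F_ψ, (λZ)^(1/(p₂−1)))^(p₂)] = (1/p₂)·V̄^(p₂) · ξ(T, 0, 1, 0, max{(A/V̄)^(γ/σ_F), V̄^(p₂−1)/λ}, +∞) + (1/p₂)·A^(p₂) · ξ(T, 0, 1, −σ_F p₂/γ, (A^(p₂−1)/λ)^(1/D), (A/V̄)^(γ/σ_F)) + (1/p₂)·λ^(p₂/(p₂−1)) · ξ(T, 0, 1, p₂/(p₂−1), 0, min{V̄^(p₂−1)/λ, (A^(p₂−1)/λ)^(1/D)}). -/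

import Mathlib

open MeasureTheory ProbabilityTheory

open scoped ENNReal

/-- Cumulative distribution function of the standard normal distribution. -/
noncomputable def Phi (x : ℝ) : ℝ := ((gaussianReal 0 1) (Set.Iic x)).toReal

/-- `Φ(d̄(x) + kγ√(s − t))`, where `d̄(x) = (ln(z/x) − (r + γ²/2)(s − t)) / (γ √(s − t))`
for `x ∈ (0, ∞)`, with the conventions `Φ(d̄(0) + u) = 1` and `Φ(d̄(∞) + u) = 0`. -/
noncomputable def PhiDbar (γ r s t z k : ℝ) (x : ℝ≥0∞) : ℝ :=
  if x = 0 then 1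
  else if x = ⊤ then 0
  else Phi ((Real.log (z / x.toReal) - (r + γ ^ 2 / 2) * (s - t)) / (γ * Real.sqrt (s - t))
      + k * γ * Real.sqrt (s - t))

/-- `ξ(s, t, z, k, a, b; γ, r)`. -/
noncomputable def xi (γ r s t z k : ℝ) (a b : ℝ≥0∞) : ℝ :=
  z ^ k * Real.exp (-k * (r + γ ^ 2 / 2) * (s - t) + k ^ 2 * γ ^ 2 / 2 * (s - t)) *
    (PhiDbar γ r s t z k a - PhiDbar γ r s t z k b) * (if a < b then 1 else 0)

/-- `h(t₁, t₂) = exp((μ_F − σ_F²/2 − σ_F r/γ − σ_F γ/2)(t₂ − t₁))`. -/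
noncomputable def hF (γ r μF σF t₁ t₂ : ℝ) : ℝ :=
  Real.exp ((μF - σF ^ 2 / 2 - σF * r / γ - σF * γ / 2) * (t₂ - t₁))

/-! Since `Z = exp(-(r + γ²/2)T - γW_T)` is monotone in `W_T`, each of `V̄`, `F_ψ = A Z^(-σ_F/γ)`
and `(λZ)^(1/(p₂-1))` is the largest of the three exactly on an interval of values of `Z`; in
Case I the ratio of the last two is monotone in `Z`, which makes the three intervals consecutive.
On each interval the integrand is a constant times a power `Z^k`, and
`E[Z^k; a ≤ Z < b] = ξ(T, 0, 1, k, a, b)` follows by completing the square: the weight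
`exp(-kγW_T)` turns the law of `W_T` into a Gaussian law with mean shifted by `-kγT`, under which
`{a ≤ Z}` is a half-line in `W_T`. -/

open Real

open scoped NNReal

section Gaussian

variable {μ : ℝ} {v : ℝ≥0}

lemma gaussianPDFReal_mul_exp (c x : ℝ) :
    gaussianPDFReal μ v x * exp (c * x)
      = exp (c * μ + v * c ^ 2 / 2) * gaussianPDFReal (μ + v * c) v x := by
  rcases eq_or_ne v 0 with rfl | hv
  · simp [gaussianPDFReal_zero_var]
  have hv' : (v : ℝ) ≠ 0 := NNReal.coe_ne_zero.mpr hv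
  simp only [gaussianPDFReal]
  rw [mul_left_comm, mul_assoc, ← exp_add, ← exp_add]
  congr 2
  field_simp
  ring

lemma setIntegral_exp_mul_gaussianReal (hv : v ≠ 0) (c : ℝ) {s : Set ℝ} (hs : MeasurableSet s) :
    ∫ x in s, exp (c * x) ∂gaussianReal μ v
      = exp (c * μ + v * c ^ 2 / 2) * (gaussianReal (μ + v * c) v s).toReal := by
  rw [gaussianReal_apply_eq_integral _ hv, ENNReal.toReal_ofReal
      (setIntegral_nonneg hs fun _ _ => gaussianPDFReal_nonneg _ _ _),
    ← integral_const_mul, ← integral_indicator hs, ← integral_indicator hs,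
    integral_gaussianReal_eq_integral_smul hv]
  congr 1 with x
  by_cases hx : x ∈ s <;> simp [hx, gaussianPDFReal_mul_exp]

lemma toReal_gaussianReal_Iic (hv : v ≠ 0) (x : ℝ) :
    (gaussianReal μ v (Set.Iic x)).toReal = Phi ((x - μ) / √v) := by
  have hsv : 0 < √(v : ℝ) := sqrt_pos.mpr (by positivity)
  have hmap : (gaussianReal 0 1).map (fun y => √v * y + μ) = gaussianReal μ v := by
    rw [show (fun y => √v * y + μ) = (· + μ) ∘ (√v * ·) from rfl,
      ← Measure.map_map (by fun_prop) (by fun_prop), gaussianReal_map_const_mul,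
      gaussianReal_map_add_const]
    congr 1
    · ring
    · ext; simp
  rw [← hmap, Measure.map_apply (by fun_prop) measurableSet_Iic, Phi]
  congr 2
  ext y
  simp only [Set.mem_preimage, Set.mem_Iic, le_div_iff₀ hsv]
  constructor <;> intro h <;> linarith

end Gaussian

noncomputable def truncRpow (k : ℝ) (a b : ℝ≥0∞) : ℝ → ℝ :=
  {x | ENNReal.ofReal x ∈ Set.Ico a b}.indicator (· ^ k)

section StatePrice

variable {γ r s t z : ℝ}

/-- The state-price density `Z_s` given `Z_t = z` and `W_s - W_t = w`. -/
noncomputable def statePrice (γ r s t z w : ℝ) : ℝ :=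
  z * exp (-(r + γ ^ 2 / 2) * (s - t) - γ * w)

@[fun_prop]
lemma measurable_statePrice : Measurable (statePrice γ r s t z) := by
  unfold statePrice
  fun_prop

lemma statePrice_pos (hz : 0 < z) (w : ℝ) : 0 < statePrice γ r s t z w :=
  mul_pos hz (exp_pos _)

lemma statePrice_rpow (hz : 0 < z) (k w : ℝ) :
    statePrice γ r s t z w ^ k
      = z ^ k * exp (-k * (r + γ ^ 2 / 2) * (s - t)) * exp (-(k * γ) * w) := by
  rw [statePrice, mul_rpow hz.le (exp_pos _).le, ← exp_mul, mul_assoc, ← exp_add]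
  ring_nf

lemma le_statePrice_iff (hγ : 0 < γ) (hz : 0 < z) {x : ℝ} (hx : 0 < x) (w : ℝ) :
    x ≤ statePrice γ r s t z w ↔ w ≤ (log (z / x) - (r + γ ^ 2 / 2) * (s - t)) / γ := by
  rw [statePrice, ← log_le_log_iff hx (mul_pos hz (exp_pos _)), log_mul hz.ne' (exp_pos _).ne',
    log_exp, log_div hz.ne' hx.ne', le_div_iff₀ hγ]
  constructor <;> intro h <;> linarith

/-- Under the law of `W_s - W_t` tilted by `Z_s ^ k`, `PhiDbar` is the probability of `a ≤ Z_s`. -/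
lemma toReal_gaussianReal_le_statePrice (hγ : 0 < γ) (hts : t < s) (hz : 0 < z) (k : ℝ)
    (a : ℝ≥0∞) :
    (gaussianReal (-(k * γ * (s - t))) (s - t).toNNReal
      {w | a ≤ ENNReal.ofReal (statePrice γ r s t z w)}).toReal = PhiDbar γ r s t z k a := by
  rcases eq_or_ne a 0 with rfl | ha0
  · simp [PhiDbar]
  rcases eq_or_ne a ⊤ with rfl | hatop
  · simp [PhiDbar]
  have hτ : 0 < s - t := sub_pos.mpr hts
  obtain ⟨x, hx, rfl⟩ : ∃ x : ℝ, 0 < x ∧ ENNReal.ofReal x = a :=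
    ⟨a.toReal, ENNReal.toReal_pos ha0 hatop, ENNReal.ofReal_toReal hatop⟩
  have hset : {w | ENNReal.ofReal x ≤ ENNReal.ofReal (statePrice γ r s t z w)}
      = Set.Iic ((log (z / x) - (r + γ ^ 2 / 2) * (s - t)) / γ) := by
    ext w
    exact (ENNReal.ofReal_le_ofReal_iff (statePrice_pos hz w).le).trans
      (le_statePrice_iff hγ hz hx w)
  rw [hset, toReal_gaussianReal_Iic (by simpa using hτ), PhiDbar, if_neg ha0, if_neg hatop,
    Real.coe_toNNReal _ hτ.le, ENNReal.toReal_ofReal hx.le]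
  congr 1
  have hsτ : 0 < √(s - t) := sqrt_pos.mpr hτ
  field_simp
  rw [sq_sqrt hτ.le]
  ring

lemma toReal_gaussianReal_statePrice_mem_Ico (hγ : 0 < γ) (hts : t < s) (hz : 0 < z) (k : ℝ)
    (a b : ℝ≥0∞) :
    (gaussianReal (-(k * γ * (s - t))) (s - t).toNNReal
      {w | ENNReal.ofReal (statePrice γ r s t z w) ∈ Set.Ico a b}).toReal
      = (PhiDbar γ r s t z k a - PhiDbar γ r s t z k b) * if a < b then 1 else 0 := by
  split_ifs with hab
  · have hsub : {w | b ≤ ENNReal.ofReal (statePrice γ r s t z w)}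
        ⊆ {w | a ≤ ENNReal.ofReal (statePrice γ r s t z w)} := fun w hw => hab.le.trans hw
    have hdiff : {w | ENNReal.ofReal (statePrice γ r s t z w) ∈ Set.Ico a b}
        = {w | a ≤ ENNReal.ofReal (statePrice γ r s t z w)}
          \ {w | b ≤ ENNReal.ofReal (statePrice γ r s t z w)} := by
      ext w
      simp [Set.mem_Ico]
    rw [hdiff, measure_sdiff hsub
      (measurableSet_le measurable_const (by fun_prop)).nullMeasurableSet (measure_ne_top _ _), ENNReal.toReal_sub_of_le (measure_mono hsub) (measure_ne_top _ _),
      toReal_gaussianReal_le_statePrice hγ hts hz, toReal_gaussianReal_le_statePrice hγ hts hz,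
      mul_one]
  · simp [Set.Ico_eq_empty hab]

lemma truncRpow_statePrice (hz : 0 < z) (k : ℝ) (a b : ℝ≥0∞) :
    (fun w => truncRpow k a b (statePrice γ r s t z w))
      = {w | ENNReal.ofReal (statePrice γ r s t z w) ∈ Set.Ico a b}.indicator
          fun w => z ^ k * exp (-k * (r + γ ^ 2 / 2) * (s - t)) * exp (-(k * γ) * w) := by
  ext w
  simp only [truncRpow, Set.indicator, Set.mem_ofPred_eq, statePrice_rpow hz]

lemma measurableSet_statePrice_mem_Ico (a b : ℝ≥0∞) :
    MeasurableSet {w | ENNReal.ofReal (statePrice γ r s t z w) ∈ Set.Ico a b} :=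
  measurableSet_Ico.preimage (by fun_prop)

lemma integrable_truncRpow_statePrice (hz : 0 < z) (k : ℝ) (a b : ℝ≥0∞) (μ : ℝ) (v : ℝ≥0) :
    Integrable (fun w => truncRpow k a b (statePrice γ r s t z w)) (gaussianReal μ v) := by
  rw [truncRpow_statePrice hz]
  exact ((integrable_exp_mul_gaussianReal _).const_mul _).indicator
    (measurableSet_statePrice_mem_Ico a b)

theorem integral_truncRpow_statePrice (hγ : 0 < γ) (hts : t < s) (hz : 0 < z) (k : ℝ)
    (a b : ℝ≥0∞) :
    ∫ w, truncRpow k a b (statePrice γ r s t z w) ∂gaussianReal 0 (s - t).toNNReal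
      = xi γ r s t z k a b := by
  have hτ : 0 < s - t := sub_pos.mpr hts
  have hmean : 0 + ((s - t).toNNReal : ℝ) * -(k * γ) = -(k * γ * (s - t)) := by
    rw [Real.coe_toNNReal _ hτ.le]
    ring
  rw [truncRpow_statePrice hz, integral_indicator (measurableSet_statePrice_mem_Ico a b),
    integral_const_mul, setIntegral_exp_mul_gaussianReal (by simpa using hτ) _
      (measurableSet_statePrice_mem_Ico a b), hmean,
    toReal_gaussianReal_statePrice_mem_Ico hγ hts hz, xi, Real.coe_toNNReal _ hτ.le,
    mul_assoc, ← mul_assoc (exp _), ← exp_add]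
  ring_nf

end StatePrice

lemma mul_rpow_le_mul_rpow_iff {B C x α β : ℝ} (hB : 0 < B) (hC : 0 < C) (hx : 0 < x)
    (hαβ : α < β) : B * x ^ α ≤ C * x ^ β ↔ (B / C) ^ (β - α)⁻¹ ≤ x := by
  rw [rpow_inv_le_iff_of_pos (div_pos hB hC).le hx.le (sub_pos.mpr hαβ), div_le_iff₀' hC,
    rpow_sub hx, mul_div_assoc', le_div_iff₀ (rpow_pos_of_pos hx α)]

lemma rpow_inv_div_rpow_neg {a b q : ℝ} (ha : 0 < a) (hb : 0 < b) (hq : q ≠ 0) :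
    (a ^ q⁻¹ / b) ^ (-q) = b ^ q / a := by
  rw [div_rpow (rpow_pos_of_pos ha _).le hb.le, ← rpow_mul ha.le, inv_mul_eq_div, neg_div,
    div_self hq, rpow_neg_one, rpow_neg hb.le, inv_div_inv]

lemma apply_max_max_eq_ite {α β : Type*} [LinearOrder α] [AddZeroClass β] (f : α → β)
    (a b c : α) :
    f (max a (max b c)) = (if b ≤ a ∧ c ≤ a then f a else 0)
      + (if c ≤ b ∧ ¬b ≤ a then f b else 0) + (if ¬c ≤ a ∧ ¬c ≤ b then f c else 0) := by
  by_cases hba : b ≤ a <;> by_cases hca : c ≤ a <;> by_cases hcb : c ≤ b <;>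
    simp only [hba, hca, hcb, not_true, not_false_eq_true, and_self, and_true, and_false,
      if_true, if_false, add_zero, zero_add] <;>
    congr 1 <;> order

section ValueFunction

variable {γ σ p lam V A D x : ℝ}

lemma mul_rpow_neg_div_le_iff (hγ : 0 < γ) (hσ : 0 < σ) (hA : 0 < A) (hV : 0 < V)
    (hx : 0 < x) :
    A * x ^ (-(σ / γ)) ≤ V ↔ (A / V) ^ (γ / σ) ≤ x := by
  have h := mul_rpow_le_mul_rpow_iff (β := 0) hA hV hx (neg_neg_of_pos (div_pos hσ hγ))
  rwa [rpow_zero, mul_one, zero_sub, neg_neg, inv_div] at h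

lemma mul_rpow_one_div_sub_one_le_iff (hp : p < 1) (hlam : 0 < lam) (hV : 0 < V) (hx : 0 < x) :
    (lam * x) ^ (1 / (p - 1)) ≤ V ↔ V ^ (p - 1) / lam ≤ x := by
  have hp1 : p - 1 ≠ 0 := (sub_neg.mpr hp).ne
  have h := mul_rpow_le_mul_rpow_iff (β := 0) (rpow_pos_of_pos hlam (1 / (p - 1))) hV hx
    (one_div_neg.mpr (sub_neg.mpr hp))
  rw [← mul_rpow hlam.le hx.le, rpow_zero, mul_one, zero_sub, one_div, inv_neg, inv_inv,
    rpow_inv_div_rpow_neg hlam hV hp1] at h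
  simpa only [one_div] using h

lemma mul_rpow_one_div_sub_one_le_mul_rpow_iff (hγ : 0 < γ) (hp : p < 1) (hlam : 0 < lam)
    (hA : 0 < A) (hD : D = 1 + σ * (p - 1) / γ) (hDpos : 0 < D) (hx : 0 < x) :
    (lam * x) ^ (1 / (p - 1)) ≤ A * x ^ (-(σ / γ)) ↔ (A ^ (p - 1) / lam) ^ (1 / D) ≤ x := by
  have hp1 : p - 1 < 0 := sub_neg.mpr hp
  -- the gap between the two exponents is `D / (1 - p)`, positive exactly in Case I
  have hgap : (-(σ / γ) - 1 / (p - 1))⁻¹ = -(p - 1) * (1 / D) := by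
    have hgap' : -(σ / γ) - 1 / (p - 1) = D / -(p - 1) := by
      have := hp1.ne
      rw [hD]
      field_simp
      ring
    rw [hgap', inv_div, div_eq_mul_one_div]
  have hαβ : 1 / (p - 1) < -(σ / γ) := by
    rw [← sub_pos, ← inv_pos, hgap]
    exact mul_pos (neg_pos.mpr hp1) (one_div_pos.mpr hDpos)
  have h := mul_rpow_le_mul_rpow_iff (rpow_pos_of_pos hlam (1 / (p - 1))) hA hx hαβ
  rw [← mul_rpow hlam.le hx.le, hgap, rpow_mul (div_pos (rpow_pos_of_pos hlam _) hA).le,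
    one_div (p - 1), rpow_inv_div_rpow_neg hlam hA hp1.ne] at h
  simpa only [one_div] using h

lemma max_rpow_eq_sum_truncRpow (hγ : 0 < γ) (hσ : 0 < σ) (hp : p < 1) (hlam : 0 < lam)
    (hV : 0 < V) (hA : 0 < A) (hD : D = 1 + σ * (p - 1) / γ) (hDpos : 0 < D) (hx : 0 < x) :
    max V (max (A * x ^ (-(σ / γ))) ((lam * x) ^ (1 / (p - 1)))) ^ p
      = V ^ p * truncRpow 0 (ENNReal.ofReal (max ((A / V) ^ (γ / σ)) (V ^ (p - 1) / lam))) ⊤ x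
        + A ^ p * truncRpow (-(σ * p / γ)) (ENNReal.ofReal ((A ^ (p - 1) / lam) ^ (1 / D)))
            (ENNReal.ofReal ((A / V) ^ (γ / σ))) x
        + lam ^ (p / (p - 1)) * truncRpow (p / (p - 1)) 0
            (ENNReal.ofReal (min (V ^ (p - 1) / lam) ((A ^ (p - 1) / lam) ^ (1 / D)))) x := by
  have hF : (A * x ^ (-(σ / γ))) ^ p = A ^ p * x ^ (-(σ * p / γ)) := by
    rw [mul_rpow hA.le (rpow_pos_of_pos hx _).le, ← rpow_mul hx.le]
    ring_nf
  have hG : ((lam * x) ^ (1 / (p - 1))) ^ p = lam ^ (p / (p - 1)) * x ^ (p / (p - 1)) := by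
    rw [← rpow_mul (mul_pos hlam hx).le, mul_rpow hlam.le hx.le, one_div_mul_eq_div]
  have hz₁ : 0 < (A / V) ^ (γ / σ) := by positivity
  have hz₂₃ : 0 < min (V ^ (p - 1) / lam) ((A ^ (p - 1) / lam) ^ (1 / D)) := by positivity
  refine (apply_max_max_eq_ite (· ^ p) _ _ _).trans ?_
  simp only [truncRpow, Set.indicator, Set.mem_ofPred_eq, Set.mem_Ico, zero_le,
    ENNReal.ofReal_le_ofReal_iff hx.le, ENNReal.ofReal_lt_ofReal_iff hz₁,
    ENNReal.ofReal_lt_ofReal_iff hz₂₃, max_le_iff, ← not_le, min_le_iff, not_or, true_and,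
    top_le_iff, ENNReal.ofReal_ne_top, not_false_eq_true, and_true,
    ← mul_rpow_neg_div_le_iff hγ hσ hA hV hx, ← mul_rpow_one_div_sub_one_le_iff hp hlam hV hx,
    ← mul_rpow_one_div_sub_one_le_mul_rpow_iff hγ hp hlam hA hD hDpos hx, rpow_zero,
    mul_ite, mul_one, mul_zero, hF, hG]

end ValueFunction

theorem case_I_conditional_value_function_general
    (T γ r σF μF p₂ lam V ψ F₀ A D : ℝ)
    (hT : 0 < T) (hγ : 0 < γ) (hσF : 0 < σF)
    (hp : p₂ < 1) (hlam : 0 < lam) (hV : 0 < V) (hψ : 0 < ψ) (hF₀ : 0 < F₀)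
    (hA : A = ψ * F₀ * hF γ r μF σF 0 T)
    (hD : D = 1 + σF * (p₂ - 1) / γ) (hCaseI : 0 < D) :
    (∫ w, (1 / p₂) *
        (max V (max
          (A * (Real.exp (-(r + γ ^ 2 / 2) * T - γ * w)) ^ (-(σF / γ)))
          ((lam * Real.exp (-(r + γ ^ 2 / 2) * T - γ * w)) ^ (1 / (p₂ - 1))))) ^ p₂
        ∂(gaussianReal 0 (Real.toNNReal T)))
      = (1 / p₂) * V ^ p₂ *
          xi γ r T 0 1 0
            (ENNReal.ofReal (max ((A / V) ^ (γ / σF)) (V ^ (p₂ - 1) / lam))) ⊤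
        + (1 / p₂) * A ^ p₂ *
            xi γ r T 0 1 (-(σF * p₂ / γ))
              (ENNReal.ofReal ((A ^ (p₂ - 1) / lam) ^ (1 / D)))
              (ENNReal.ofReal ((A / V) ^ (γ / σF)))
        + (1 / p₂) * lam ^ (p₂ / (p₂ - 1)) *
            xi γ r T 0 1 (p₂ / (p₂ - 1)) 0
              (ENNReal.ofReal (min (V ^ (p₂ - 1) / lam) ((A ^ (p₂ - 1) / lam) ^ (1 / D)))) := by
  have hA₀ : 0 < A := hA ▸ mul_pos (mul_pos hψ hF₀) (exp_pos _)
  have hZ (w : ℝ) : exp (-(r + γ ^ 2 / 2) * T - γ * w) = statePrice γ r T 0 1 w := by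
    rw [statePrice, one_mul, sub_zero]
  have hintegrable (k : ℝ) (a b : ℝ≥0∞) :=
    integrable_truncRpow_statePrice (γ := γ) (r := r) (s := T) (t := 0) one_pos k a b 0 T.toNNReal
  have hxi (k : ℝ) (a b : ℝ≥0∞) := sub_zero T ▸
    integral_truncRpow_statePrice (r := r) hγ hT one_pos k a b
  simp_rw [hZ, max_rpow_eq_sum_truncRpow hγ hσF hp hlam hV hA₀ hD hCaseI (statePrice_pos one_pos _),
    mul_add]
  have hterm (c₁ c₂ k : ℝ) (a b : ℝ≥0∞) := ((hintegrable k a b).const_mul c₁).const_mul c₂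
  rw [integral_add ((hterm ..).fun_add (hterm ..)) (hterm ..), integral_add (hterm ..) (hterm ..)]
  simp only [integral_const_mul, hxi, mul_assoc]

theorem case_I_conditional_value_function
    (T γ r σF μF p₂ lam V ψ F₀ A D : ℝ)
    (hT : 0 < T) (hγ : 0 < γ) (hr : 0 < r) (hσF : 0 < σF)
    (hp : p₂ < 1) (hp0 : p₂ ≠ 0) (hlam : 0 < lam) (hV : 0 < V) (hψ : 0 < ψ) (hF₀ : 0 < F₀)
    (hA : A = ψ * F₀ * hF γ r μF σF 0 T)
    (hD : D = 1 + σF * (p₂ - 1) / γ) (hCaseI : 0 < D) :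
    (∫ w, (1 / p₂) *
        (max V (max
          (A * (Real.exp (-(r + γ ^ 2 / 2) * T - γ * w)) ^ (-(σF / γ)))
          ((lam * Real.exp (-(r + γ ^ 2 / 2) * T - γ * w)) ^ (1 / (p₂ - 1))))) ^ p₂
        ∂(gaussianReal 0 (Real.toNNReal T)))
      = (1 / p₂) * V ^ p₂ *
          xi γ r T 0 1 0
            (ENNReal.ofReal (max ((A / V) ^ (γ / σF)) (V ^ (p₂ - 1) / lam))) ⊤
        + (1 / p₂) * A ^ p₂ *
            xi γ r T 0 1 (-(σF * p₂ / γ))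
              (ENNReal.ofReal ((A ^ (p₂ - 1) / lam) ^ (1 / D)))
              (ENNReal.ofReal ((A / V) ^ (γ / σF)))
        + (1 / p₂) * lam ^ (p₂ / (p₂ - 1)) *
            xi γ r T 0 1 (p₂ / (p₂ - 1)) 0
              (ENNReal.ofReal (min (V ^ (p₂ - 1) / lam) ((A ^ (p₂ - 1) / lam) ^ (1 / D)))) :=
  case_I_conditional_value_function_general T γ r σF μF p₂ lam V ψ F₀ A D hT hγ hσF hp hlam hV hψ
    hF₀ hA hD hCaseI
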